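/- Let G be a directed acyclic graph on V = Fin n, let Λ be a real n×n matrix supported on the arrows of G, let Φ be a diagonal n×n matrix, and let Σ = (I − Λ)⁻ᵀ Φ (I − Λ)⁻¹. Then for all vertices i, j: Σ[i, j] equals the sum, over all treks π from i to j in G, of Φ[t, t] · Π_{u→v an arrow traversed by π} Λ[u, v], where t is the top of π. (Since G is acyclic there are only finitely many treks from i to j.) -/

import Mathlib

open Classical Matrix

/-- A trek in a directed graph given by the arrow relation `E`: a pair of
directed paths (nonempty lists of vertices) from a common top vertex. -/
structure DTrek {n : ℕ} (E : Fin n → Fin n → Prop) where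
  left : List (Fin n)
  right : List (Fin n)
  left_ne : left ≠ []
  right_ne : right ≠ []
  left_chain : left.Chain' E
  right_chain : right.Chain' E
  top_eq : left.head left_ne = right.head right_ne

namespace DTrek

variable {n : ℕ} {E : Fin n → Fin n → Prop}

/-- The top of a trek. -/
def top (t : DTrek E) : Fin n := t.left.head t.left_ne

/-- The left endpoint of a trek. -/
def src (t : DTrek E) : Fin n := t.left.getLast t.left_ne

/-- The right endpoint of a trek. -/
def dst (t : DTrek E) : Fin n := t.right.getLast t.right_ne

end DTrek

/-- `(L, R)` t-separates the vertex sets `A` and `B` in the directed graph `E`: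
every trek from `A` to `B` has a vertex of `L` on its left side or a vertex of
`R` on its right side. -/
def DTSep {n : ℕ} (E : Fin n → Fin n → Prop) (L R : Finset (Fin n))
    (A B : Set (Fin n)) : Prop :=
  ∀ t : DTrek E, t.src ∈ A → t.dst ∈ B →
    (∃ v ∈ L, v ∈ t.left) ∨ (∃ v ∈ R, v ∈ t.right)

/-- The directed graph `E` is acyclic. -/
def EAcyclic {n : ℕ} (E : Fin n → Fin n → Prop) : Prop :=
  ∀ v, ¬ Relation.TransGen E v v

/-- `Λ` is supported on the arrows of `E`. -/
def SupportedOn {n : ℕ} (E : Fin n → Fin n → Prop)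
    (Λ : Matrix (Fin n) (Fin n) ℝ) : Prop :=
  ∀ u v, ¬ E u v → Λ u v = 0

/-- The implied covariance matrix `Σ = (I − Λ)⁻ᵀ Φ (I − Λ)⁻¹` of an SEM. -/
noncomputable def impliedCov {n : ℕ} (Λ Φ : Matrix (Fin n) (Fin n) ℝ) :
    Matrix (Fin n) (Fin n) ℝ :=
  ((1 - Λ)⁻¹)ᵀ * Φ * (1 - Λ)⁻¹

/-- The covariance of variable `i` with the composite error
`ε = Σ_{p ∈ Pa(y)\X} Λ[p,y]·x_p + ε_y` of the equation of `y`: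
`Σ_{p ∈ Pa(y)\X} Λ[p,y]·Σ[i,p] + ((I − Λ)⁻ᵀΦ)[i,y]`. -/
noncomputable def errorCov {n : ℕ} (E : Fin n → Fin n → Prop)
    (Λ Φ : Matrix (Fin n) (Fin n) ℝ) (y : Fin n) (X : Finset (Fin n))
    (i : Fin n) : ℝ :=
  (∑ p ∈ Finset.univ.filter (fun p => E p y ∧ p ∉ X),
      Λ p y * impliedCov Λ Φ i p)
    + ((((1 - Λ)⁻¹)ᵀ * Φ : Matrix (Fin n) (Fin n) ℝ)) i y

/-- The product of the path coefficients `Λ[u,v]` over the consecutive arrows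
of a list of vertices. -/
def pathProd {n : ℕ} (Λ : Matrix (Fin n) (Fin n) ℝ) (l : List (Fin n)) : ℝ :=
  ((l.zip l.tail).map fun p => Λ p.1 p.2).prod

/-- The trek-rule weight of a trek: the error variance of its top times the
product of the path coefficients of all arrows it traverses (with
multiplicity). -/
noncomputable def trekWeight {n : ℕ} {E : Fin n → Fin n → Prop}
    (Λ Φ : Matrix (Fin n) (Fin n) ℝ) (t : DTrek E) : ℝ :=
  Φ t.top t.top * pathProd Λ t.left * pathProd Λ t.right

/-! Let `P t v` be the sum of the coefficient products of the directed paths from `t` to `v`;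
by acyclicity these paths repeat no vertex, so there are finitely many. Splitting off the first
arrow of a path gives `P = 1 + Λ P`, hence `P = (I − Λ)⁻¹`. As `Φ` is diagonal,
`Σ i j = ∑ t, P t i * Φ t t * P t j`, and a trek from `i` to `j` with top `t` is exactly a pair
of paths from `t` to `i` and from `t` to `j`. -/

namespace List

variable {α : Type*} {r : α → α → Prop}

theorem IsChain.nodup_of_irrefl_transGen (hr : ∀ a, ¬ Relation.TransGen r a a) {l : List α}
    (h : l.IsChain r) : l.Nodup := by
  refine (isChain_iff_pairwise.mp (h.imp fun _ _ => Relation.TransGen.single)).imp ?_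
  rintro a _ hab rfl
  exact hr a hab

end List

section Paths

variable {n : ℕ} {E : Fin n → Fin n → Prop} {Λ : Matrix (Fin n) (Fin n) ℝ}

/-- A directed path from `t` to `v`, recorded by the list of vertices that follow `t`. -/
def DPath (E : Fin n → Fin n → Prop) (t v : Fin n) : Type :=
  {l : List (Fin n) // (t :: l).IsChain E ∧ l.getLastD t = v}

theorem DPath.finite (hacyc : EAcyclic E) (t v : Fin n) : Finite (DPath E t v) :=
  Finite.of_injective
    (fun p : DPath E t v => (⟨t :: p.1, p.2.1.nodup_of_irrefl_transGen hacyc⟩ :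
      {l : List (Fin n) // l.Nodup}))
    fun _ _ h => Subtype.ext (List.cons_injective (congrArg Subtype.val h))

def DPath.consEquiv (E : Fin n → Fin n → Prop) (t v : Fin n) :
    DPath E t v ≃ PLift (t = v) ⊕ Σ u : {u // E t u}, DPath E u v where
  toFun
    | ⟨[], h⟩ => .inl ⟨h.2⟩
    | ⟨u :: l, h⟩ => .inr ⟨⟨u, (List.isChain_cons_cons.mp h.1).1⟩,
        ⟨l, (List.isChain_cons_cons.mp h.1).2, List.getLastD_cons ▸ h.2⟩⟩
  invFun
    | .inl h => ⟨[], List.isChain_singleton t, h.down⟩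
    | .inr ⟨u, p⟩ => ⟨u.1 :: p.1, List.isChain_cons_cons.mpr ⟨u.2, p.2.1⟩,
        List.getLastD_cons.trans p.2.2⟩
  left_inv := by rintro ⟨_ | ⟨u, l⟩, h⟩ <;> rfl
  right_inv := by rintro (h | ⟨u, p⟩) <;> rfl

theorem pathProd_cons_cons (Λ : Matrix (Fin n) (Fin n) ℝ) (a b : Fin n) (l : List (Fin n)) :
    pathProd Λ (a :: b :: l) = Λ a b * pathProd Λ (b :: l) := by
  simp [pathProd]

noncomputable def pathSum (E : Fin n → Fin n → Prop) (Λ : Matrix (Fin n) (Fin n) ℝ) :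
    Matrix (Fin n) (Fin n) ℝ :=
  Matrix.of fun t v => ∑ᶠ p : DPath E t v, pathProd Λ (t :: p.1)

theorem pathSum_eq_one_add_mul (hacyc : EAcyclic E) (hΛ : SupportedOn E Λ) :
    pathSum E Λ = 1 + Λ * pathSum E Λ := by
  have := DPath.finite (E := E) hacyc
  have : ∀ t v, Fintype (DPath E t v) := fun _ _ => Fintype.ofFinite _
  ext t v
  simp only [pathSum, Matrix.of_apply, Matrix.add_apply, Matrix.mul_apply,
    finsum_eq_sum_of_fintype]
  rw [← (DPath.consEquiv E t v).symm.sum_comp, Fintype.sum_sum_type, Fintype.sum_sigma]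
  congr 1
  · obtain rfl | hne := eq_or_ne t v
    · simp [DPath.consEquiv, pathProd]
    · simp [hne]
  · simp only [DPath.consEquiv, Equiv.coe_fn_symm_mk, pathProd_cons_cons, ← Finset.mul_sum]
    calc _ = ∑ u ∈ Finset.univ.filter (E t),
            Λ t u * ∑ p : DPath E u v, pathProd Λ (u :: p.1) :=
          (Finset.sum_subtype _ (by simp) _).symm
      _ = _ := Finset.sum_filter_of_ne fun u _ h =>
          by_contra fun hE => h (by rw [hΛ t u hE, zero_mul])

theorem inv_one_sub_eq_pathSum (hacyc : EAcyclic E) (hΛ : SupportedOn E Λ) :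
    (1 - Λ)⁻¹ = pathSum E Λ := by
  refine Matrix.inv_eq_right_inv ?_
  rw [sub_mul, one_mul, sub_eq_iff_eq_add]
  exact pathSum_eq_one_add_mul hacyc hΛ

end Paths

theorem Matrix.transpose_mul_mul_apply_of_isDiag {ι R : Type*} [Fintype ι] [DecidableEq ι]
    [CommSemiring R] (A B : Matrix ι ι R) {D : Matrix ι ι R} (hD : D.IsDiag) (i j : ι) :
    (Aᵀ * D * B) i j = ∑ t, A t i * D t t * B t j := by
  rw [← hD.diagonal_diag, Matrix.mul_apply]
  simp [Matrix.mul_diagonal]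

namespace DTrek

variable {n : ℕ} {E : Fin n → Fin n → Prop}

theorem ext_left_right {τ σ : DTrek E} (hl : τ.left = σ.left) (hr : τ.right = σ.right) :
    τ = σ := by
  cases τ; cases σ; cases hl; cases hr; rfl

theorem top_cons_left_tail (τ : DTrek E) : τ.top :: τ.left.tail = τ.left :=
  List.cons_head_tail τ.left_ne

theorem top_cons_right_tail (τ : DTrek E) : τ.top :: τ.right.tail = τ.right := by
  rw [top, τ.top_eq]; exact List.cons_head_tail τ.right_ne

theorem src_eq_getLastD (τ : DTrek E) : τ.src = τ.left.tail.getLastD τ.top := by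
  rw [← List.getLast_eq_getLastD (List.cons_ne_nil _ _)]
  simp only [src, top_cons_left_tail]

theorem dst_eq_getLastD (τ : DTrek E) : τ.dst = τ.right.tail.getLastD τ.top := by
  rw [← List.getLast_eq_getLastD (List.cons_ne_nil _ _)]
  simp only [dst, top_cons_right_tail]

def equivPaths (i j : Fin n) :
    {τ : DTrek E // τ.src = i ∧ τ.dst = j} ≃ Σ t, DPath E t i × DPath E t j where
  toFun τ := ⟨τ.1.top,
    ⟨τ.1.left.tail, τ.1.top_cons_left_tail ▸ τ.1.left_chain,
      τ.1.src_eq_getLastD ▸ τ.2.1⟩,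
    ⟨τ.1.right.tail, τ.1.top_cons_right_tail ▸ τ.1.right_chain,
      τ.1.dst_eq_getLastD ▸ τ.2.2⟩⟩
  invFun x :=
    ⟨{ left := x.1 :: x.2.1.1
       right := x.1 :: x.2.2.1
       left_ne := List.cons_ne_nil _ _
       right_ne := List.cons_ne_nil _ _
       left_chain := x.2.1.2.1
       right_chain := x.2.2.2.1
       top_eq := rfl },
      (List.getLast_eq_getLastD _).trans x.2.1.2.2, (List.getLast_eq_getLastD _).trans x.2.2.2.2⟩
  left_inv τ := Subtype.ext (ext_left_right τ.1.top_cons_left_tail τ.1.top_cons_right_tail)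
  right_inv _ := rfl

theorem trekWeight_equivPaths_symm (Λ Φ : Matrix (Fin n) (Fin n) ℝ) {i j t : Fin n}
    (p : DPath E t i) (q : DPath E t j) :
    trekWeight Λ Φ ((equivPaths i j).symm ⟨t, p, q⟩).1 =
      Φ t t * pathProd Λ (t :: p.1) * pathProd Λ (t :: q.1) :=
  rfl

end DTrek

/-- trek rule: in an acyclic SEM there are only finitely many
treks from `i` to `j`, and `Σ[i,j]` is the sum of their weights. -/
theorem trek_rule
    {n : ℕ} (E : Fin n → Fin n → Prop) (hacyc : EAcyclic E)
    (Λ Φ : Matrix (Fin n) (Fin n) ℝ)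
    (hΛ : SupportedOn E Λ) (hdiag : ∀ u v, u ≠ v → Φ u v = 0) :
    ∀ i j : Fin n,
      Finite {t : DTrek E // t.src = i ∧ t.dst = j} ∧
      impliedCov Λ Φ i j =
        ∑ᶠ t : {t : DTrek E // t.src = i ∧ t.dst = j}, trekWeight Λ Φ t.1 := by
  intro i j
  have := DPath.finite (E := E) hacyc
  have hfin := Finite.of_equiv _ (DTrek.equivPaths (E := E) i j).symm
  refine ⟨hfin, ?_⟩
  have : ∀ t v, Fintype (DPath E t v) := fun _ _ => Fintype.ofFinite _
  have := Fintype.ofFinite {t : DTrek E // t.src = i ∧ t.dst = j}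
  rw [impliedCov, Matrix.transpose_mul_mul_apply_of_isDiag _ _ (fun u v => hdiag u v),
    inv_one_sub_eq_pathSum hacyc hΛ, finsum_eq_sum_of_fintype,
    ← (DTrek.equivPaths i j).symm.sum_comp, Fintype.sum_sigma]
  refine Fintype.sum_congr _ _ fun t => ?_
  simp only [pathSum, Matrix.of_apply, finsum_eq_sum_of_fintype, Fintype.sum_prod_type,
    DTrek.trekWeight_equivPaths_symm]
  rw [Finset.sum_mul, Finset.sum_mul_sum]
  exact Fintype.sum_congr _ _ fun p => Fintype.sum_congr _ _ fun q => by ring
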